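/- Let G be a finite directed graph, let r be the number of vertices of G having in-degree zero, and let p_min be the minimum number of paths over all path-and-cycle covers of G. Then for every integer k ≥ 3, the minimum over all necklace covers of G of the quantity (k − 1)·N_O + 2·N_L equals (k − 1)·r + 2·(p_min − r), where N_O is the number of open necklaces and N_L the number of pendant leaves of the necklace cover. -/

import Mathlib

open scoped Classical

variable {V : Type*} [DecidableEq V]

/-- In-degree of `v` in the digraph with edge set `E`. -/
def indeg (E : Finset (V × V)) (v : V) : ℕ := (E.filter (fun e => e.2 = v)).card

/-- Out-degree of `v` in the digraph with edge set `E`. -/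
def outdeg (E : Finset (V × V)) (v : V) : ℕ := (E.filter (fun e => e.1 = v)).card

/-- `l` is a simple directed path (possibly a single vertex) in the digraph `E`. -/
def IsDiPath (E : Finset (V × V)) (l : List V) : Prop :=
  l ≠ [] ∧ l.Nodup ∧ l.Chain' (fun u v => (u, v) ∈ E)

/-- `l` is a simple directed cycle in the digraph `E`. -/
def IsDiCycle (E : Finset (V × V)) (l : List V) : Prop :=
  ∃ h : l ≠ [], l.Nodup ∧ l.Chain' (fun u v => (u, v) ∈ E) ∧
    (l.getLast h, l.head h) ∈ E

/-- A path-and-cycle cover (PC cover) of the digraph `E`. -/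
structure PCCover (E : Finset (V × V)) where
  paths : Finset (List V)
  cycles : Finset (List V)
  paths_are : ∀ l ∈ paths, IsDiPath E l
  cycles_are : ∀ l ∈ cycles, IsDiCycle E l
  disj : Disjoint paths cycles
  pairwiseDisj : ∀ l₁ ∈ paths ∪ cycles, ∀ l₂ ∈ paths ∪ cycles, l₁ ≠ l₂ → ∀ v ∈ l₁, v ∉ l₂
  covers : ∀ v : V, ∃ l ∈ paths ∪ cycles, v ∈ l

/-- Edge set of the split bipartite graph of the digraph `E`, on vertex set `V ⊕ V`
(`Sum.inl` is the left copy `f_L`, `Sum.inr` the right copy `f_R`). -/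
def splitEdges (E : Finset (V × V)) : Finset ((V ⊕ V) × (V ⊕ V)) :=
  E.image (fun e => (Sum.inl e.1, Sum.inr e.2))

/-- A set of edges is a matching if no two of its edges share an endpoint. -/
def IsMatching {W : Type*} (M : Finset (W × W)) : Prop :=
  ∀ e₁ ∈ M, ∀ e₂ ∈ M, e₁ ≠ e₂ →
    e₁.1 ≠ e₂.1 ∧ e₁.1 ≠ e₂.2 ∧ e₁.2 ≠ e₂.1 ∧ e₁.2 ≠ e₂.2

/-- The set `F ⊆ E` of edges of `G` pulled back from a matching of the split bipartite graph. -/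
def pullback (E : Finset (V × V)) (M : Finset ((V ⊕ V) × (V ⊕ V))) : Finset (V × V) :=
  E.filter (fun e => (Sum.inl e.1, Sum.inr e.2) ∈ M)

/-- Weak reachability (reachability after forgetting edge directions) in the digraph `F`. -/
def WReach (F : Finset (V × V)) (a b : V) : Prop :=
  Relation.ReflTransGen (fun x y => (x, y) ∈ F ∨ (y, x) ∈ F) a b

/-- `H = (verts, edges)` is a necklace of the digraph `E`: a weakly connected subgraph of `E`
in which every vertex has in-degree at most one. -/
def IsNecklace (E : Finset (V × V)) (H : Finset V × Finset (V × V)) : Prop :=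
  H.1.Nonempty ∧ H.2 ⊆ E ∧ (∀ e ∈ H.2, e.1 ∈ H.1 ∧ e.2 ∈ H.1) ∧
  (∀ a ∈ H.1, ∀ b ∈ H.1,
    Relation.ReflTransGen (fun x y => (x, y) ∈ H.2 ∨ (y, x) ∈ H.2) a b) ∧
  (∀ v ∈ H.1, indeg H.2 v ≤ 1)

/-- A necklace is closed if it contains a directed cycle (and open otherwise). -/
def IsClosedNecklace (H : Finset V × Finset (V × V)) : Prop :=
  ∃ l : List V, IsDiCycle H.2 l

/-- `C` is a necklace cover of the digraph `E`: a collection of necklaces with pairwise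
disjoint vertex sets covering every vertex. -/
def IsNecklaceCover (E : Finset (V × V)) (C : Finset (Finset V × Finset (V × V))) : Prop :=
  (∀ H ∈ C, IsNecklace E H) ∧
  (∀ H₁ ∈ C, ∀ H₂ ∈ C, H₁ ≠ H₂ → Disjoint H₁.1 H₂.1) ∧
  (∀ v : V, ∃ H ∈ C, v ∈ H.1)

/-- `N_O`: the number of open necklaces of the cover `C`. -/
noncomputable def numOpen (C : Finset (Finset V × Finset (V × V))) : ℕ :=
  (C.filter (fun H => ¬ IsClosedNecklace H)).card

/-- Total number of vertices of out-degree zero within their necklace, over the cover `C`. -/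
def numSinks (C : Finset (Finset V × Finset (V × V))) : ℕ :=
  ∑ H ∈ C, (H.1.filter (fun v => outdeg H.2 v = 0)).card

/-- `N_L`: the number of pendant leaves of the cover `C` (total number of out-degree-zero
vertices within their necklace, minus the number of open necklaces). -/
noncomputable def numLeaves (C : Finset (Finset V × Finset (V × V))) : ℕ :=
  numSinks C - numOpen C


/-!
A necklace cover is the same thing as a subgraph `F ⊆ E` of in-degree at most one, cut into its
weak components: the open necklaces are the components with a source (exactly one each), and
the vertices of out-degree zero are the sinks of `F`. Keeping one out-edge at every non-sink of
`F` leaves a path-and-cycle cover with `#(sinks F)` paths, so `p_min ≤ #(sinks F)`; moreover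
`r ≤ #(sources F) ≤ #(sinks F)`, since `F` has at least as many edges as it has tails. As
`k - 1 ≥ 2`, the cost `(k - 1) * #(sources F) + 2 * (#(sinks F) - #(sources F))` is therefore at
least `(k - 1) * r + 2 * (p_min - r)`. Equality holds for the edges of an optimal path-and-cycle
cover enlarged by one in-edge at every path head that has an in-edge in `G`: this leaves exactly
the `r` sources of `G` and creates no new sink.
-/

set_option linter.unusedSectionVars false

open Finset

theorem injOn_insert_iff {α β : Type*} [DecidableEq α] [DecidableEq β] {f : α → β}
    {s : Finset α} {a : α} (ha : a ∉ s) :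
    Set.InjOn f (insert a s : Finset α) ↔ Set.InjOn f (s : Set α) ∧ f a ∉ s.image f := by
  rw [coe_insert, Set.injOn_insert (mem_coe.not.2 ha), ← coe_image, mem_coe]

theorem injOn_insert_of_notMem_image {α β : Type*} [DecidableEq α] [DecidableEq β]
    {f : α → β} {s : Finset α} {a : α} (hs : Set.InjOn f (s : Set α)) (ha : f a ∉ s.image f) :
    Set.InjOn f (insert a s : Finset α) :=
  (injOn_insert_iff fun h => ha (mem_image_of_mem f h)).2 ⟨hs, ha⟩

section Degrees

variable {F G : Finset (V × V)} {v : V}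

theorem indeg_eq_zero_iff : indeg F v = 0 ↔ v ∉ F.image Prod.snd := by
  simp only [indeg, card_eq_zero, filter_eq_empty_iff, mem_image, not_exists, not_and]

theorem outdeg_eq_zero_iff : outdeg F v = 0 ↔ v ∉ F.image Prod.fst := by
  simp only [outdeg, card_eq_zero, filter_eq_empty_iff, mem_image, not_exists, not_and]

theorem indeg_le_one_iff :
    indeg F v ≤ 1 ↔ ∀ e ∈ F, ∀ e' ∈ F, e.2 = v → e'.2 = v → e = e' := by
  simp only [indeg, card_le_one, mem_filter, and_imp]
  exact ⟨fun h e he e' he' hev he'v => h e he hev e' he' he'v,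
    fun h e he hev e' he' he'v => h e he e' he' hev he'v⟩

theorem forall_indeg_le_one_iff : (∀ v, indeg F v ≤ 1) ↔ Set.InjOn Prod.snd (F : Set (V × V)) := by
  simp only [indeg_le_one_iff, Set.InjOn, mem_coe]
  exact ⟨fun h e he e' he' hee' => h e.2 e he e' he' rfl hee'.symm,
    fun h v e he e' he' hev he'v => h he he' (hev.trans he'v.symm)⟩

variable [Fintype V]

noncomputable def sources (F : Finset (V × V)) : Finset V := univ.filter (indeg F · = 0)

noncomputable def sinks (F : Finset (V × V)) : Finset V := univ.filter (outdeg F · = 0)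

theorem sources_eq_compl : sources F = (F.image Prod.snd)ᶜ := by
  ext v; simp [sources, indeg_eq_zero_iff]

theorem sinks_eq_compl : sinks F = (F.image Prod.fst)ᶜ := by
  ext v; simp [sinks, outdeg_eq_zero_iff]

theorem mem_sources : v ∈ sources F ↔ v ∉ F.image Prod.snd := by
  simp [sources_eq_compl]

theorem sources_anti (h : F ⊆ G) : sources G ⊆ sources F := by
  rw [sources_eq_compl, sources_eq_compl]
  exact compl_subset_compl.2 (image_subset_image h)

theorem sinks_anti (h : F ⊆ G) : sinks G ⊆ sinks F := by
  rw [sinks_eq_compl, sinks_eq_compl]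
  exact compl_subset_compl.2 (image_subset_image h)

theorem card_sinks_add_card_image_fst : #(sinks F) + #(F.image Prod.fst) = Fintype.card V := by
  rw [sinks_eq_compl, card_compl_add_card]

theorem card_sources_add_card (h : Set.InjOn Prod.snd (F : Set (V × V))) :
    #(sources F) + #F = Fintype.card V := by
  rw [sources_eq_compl, ← card_image_of_injOn h, card_compl_add_card]

theorem card_sinks_add_card (h : Set.InjOn Prod.fst (F : Set (V × V))) :
    #(sinks F) + #F = Fintype.card V := by
  rw [← card_image_of_injOn h, card_sinks_add_card_image_fst]

theorem card_sources_le_card_sinks (h : Set.InjOn Prod.snd (F : Set (V × V))) :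
    #(sources F) ≤ #(sinks F) := by
  have := card_sources_add_card h
  have := card_sinks_add_card_image_fst (F := F)
  have := card_image_le (s := F) (f := Prod.fst)
  omega

end Degrees

section Lists

def chainEdges : List V → Finset (V × V)
  | a :: b :: t => insert (a, b) (chainEdges (b :: t))
  | _ => ∅

def cycleEdges : List V → Finset (V × V)
  | [] => ∅
  | a :: t => insert ((a :: t).getLast (List.cons_ne_nil a t), a) (chainEdges (a :: t))

variable {E : Finset (V × V)} {l l₁ l₂ : List V} {e : V × V} {v : V}

@[simp] theorem chainEdges_cons_cons (a b : V) (t : List V) :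
    chainEdges (a :: b :: t) = insert (a, b) (chainEdges (b :: t)) := rfl

@[simp] theorem chainEdges_singleton (a : V) : chainEdges [a] = ∅ := rfl

theorem cycleEdges_eq (hl : l ≠ []) :
    cycleEdges l = insert (l.getLast hl, l.head hl) (chainEdges l) := by
  cases l with
  | nil => exact absurd rfl hl
  | cons a t => rfl

theorem chainEdges_subset_cycleEdges : chainEdges l ⊆ cycleEdges l := by
  cases l with
  | nil => exact Subset.refl _
  | cons a t => exact subset_insert _ _

theorem chainEdges_subset_of_isChain (h : l.IsChain fun u v => (u, v) ∈ E) :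
    chainEdges l ⊆ E := by
  induction l with
  | nil => exact empty_subset _
  | cons a t ih =>
    cases t with
    | nil => exact empty_subset _
    | cons b t =>
      rw [List.isChain_cons_cons] at h
      exact insert_subset h.1 (ih h.2)

theorem fst_mem_dropLast_of_mem_chainEdges (he : e ∈ chainEdges l) : e.1 ∈ l.dropLast := by
  induction l with
  | nil => simp [chainEdges] at he
  | cons a t ih =>
    cases t with
    | nil => simp at he
    | cons b t =>
      rcases mem_insert.1 he with rfl | he
      · simp
      · simpa using Or.inr (ih he)

theorem snd_mem_tail_of_mem_chainEdges (he : e ∈ chainEdges l) : e.2 ∈ l.tail := by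
  induction l with
  | nil => simp [chainEdges] at he
  | cons a t ih =>
    cases t with
    | nil => simp at he
    | cons b t =>
      rcases mem_insert.1 he with rfl | he
      · simp
      · exact List.mem_of_mem_tail (ih he)

theorem exists_mem_chainEdges_of_mem_tail (hv : v ∈ l.tail) : ∃ u, (u, v) ∈ chainEdges l := by
  induction l with
  | nil => simp at hv
  | cons a t ih =>
    cases t with
    | nil => simp at hv
    | cons b t =>
      rcases List.mem_cons.1 hv with rfl | hv
      · exact ⟨a, mem_insert_self _ _⟩
      · obtain ⟨u, hu⟩ := ih hv
        exact ⟨u, mem_insert_of_mem hu⟩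

theorem exists_mem_chainEdges_of_mem_dropLast (hv : v ∈ l.dropLast) :
    ∃ w, (v, w) ∈ chainEdges l := by
  induction l with
  | nil => simp at hv
  | cons a t ih =>
    cases t with
    | nil => simp at hv
    | cons b t =>
      rcases List.mem_cons.1 hv with rfl | hv
      · exact ⟨b, mem_insert_self _ _⟩
      · obtain ⟨w, hw⟩ := ih hv
        exact ⟨w, mem_insert_of_mem hw⟩

theorem mem_of_mem_chainEdges (he : e ∈ chainEdges l) : e.1 ∈ l ∧ e.2 ∈ l :=
  ⟨List.dropLast_subset _ (fst_mem_dropLast_of_mem_chainEdges he),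
    List.mem_of_mem_tail (snd_mem_tail_of_mem_chainEdges he)⟩

theorem mem_of_mem_cycleEdges (he : e ∈ cycleEdges l) : e.1 ∈ l ∧ e.2 ∈ l := by
  cases l with
  | nil => simp [cycleEdges] at he
  | cons a t =>
    rcases mem_insert.1 he with rfl | he
    · exact ⟨List.getLast_mem _, List.mem_cons_self⟩
    · exact mem_of_mem_chainEdges he

theorem List.Nodup.getLast_notMem_dropLast {α : Type*} {l : List α} (hl : l.Nodup)
    (hne : l ≠ []) : l.getLast hne ∉ l.dropLast :=
  fun h => hl.rel_dropLast_getLast h rfl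

theorem chainEdges_injOn_snd (hl : l.Nodup) :
    Set.InjOn Prod.snd (chainEdges l : Set (V × V)) := by
  induction l with
  | nil => simp [chainEdges]
  | cons a t ih =>
    cases t with
    | nil => simp
    | cons b t =>
      refine injOn_insert_of_notMem_image (ih hl.of_cons) fun h => ?_
      obtain ⟨e, he, hb⟩ := mem_image.1 h
      exact (List.nodup_cons.1 hl.of_cons).1 (by simpa [hb] using snd_mem_tail_of_mem_chainEdges he)

theorem chainEdges_injOn_fst (hl : l.Nodup) :
    Set.InjOn Prod.fst (chainEdges l : Set (V × V)) := by
  induction l with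
  | nil => simp [chainEdges]
  | cons a t ih =>
    cases t with
    | nil => simp
    | cons b t =>
      refine injOn_insert_of_notMem_image (ih hl.of_cons) fun h => ?_
      obtain ⟨e, he, ha⟩ := mem_image.1 h
      exact (List.nodup_cons.1 hl).1
        (List.dropLast_subset _ (by simpa [ha] using fst_mem_dropLast_of_mem_chainEdges he))

theorem cycleEdges_injOn_snd (hl : l.Nodup) :
    Set.InjOn Prod.snd (cycleEdges l : Set (V × V)) := by
  cases l with
  | nil => simp [cycleEdges]
  | cons a t =>
    refine injOn_insert_of_notMem_image (chainEdges_injOn_snd hl) fun h => ?_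
    obtain ⟨e, he, ha⟩ := mem_image.1 h
    exact (List.nodup_cons.1 hl).1 (by simpa [ha] using snd_mem_tail_of_mem_chainEdges he)

theorem cycleEdges_injOn_fst (hl : l.Nodup) :
    Set.InjOn Prod.fst (cycleEdges l : Set (V × V)) := by
  cases l with
  | nil => simp [cycleEdges]
  | cons a t =>
    refine injOn_insert_of_notMem_image (chainEdges_injOn_fst hl) fun h => ?_
    obtain ⟨e, he, ha⟩ := mem_image.1 h
    exact List.Nodup.getLast_notMem_dropLast hl _
      (by simpa [ha] using fst_mem_dropLast_of_mem_chainEdges he)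

theorem exists_mem_cycleEdges_snd (hv : v ∈ l) : ∃ u, (u, v) ∈ cycleEdges l := by
  cases l with
  | nil => simp at hv
  | cons a t =>
    rcases List.mem_cons.1 hv with rfl | hv
    · exact ⟨_, mem_insert_self _ _⟩
    · obtain ⟨u, hu⟩ := exists_mem_chainEdges_of_mem_tail (l := a :: t) hv
      exact ⟨u, mem_insert_of_mem hu⟩

theorem exists_mem_cycleEdges_fst (hv : v ∈ l) : ∃ w, (v, w) ∈ cycleEdges l := by
  have hne := List.ne_nil_of_mem hv
  by_cases hlast : v = l.getLast hne
  · exact ⟨l.head hne, by rw [cycleEdges_eq hne, hlast]; exact mem_insert_self _ _⟩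
  · obtain ⟨w, hw⟩ := exists_mem_chainEdges_of_mem_dropLast
      (List.mem_dropLast_of_mem_of_ne_getLast hv hlast)
    exact ⟨w, chainEdges_subset_cycleEdges hw⟩

theorem chainEdges_append (h₁ : l₁ ≠ []) (h₂ : l₂ ≠ []) :
    chainEdges (l₁ ++ l₂) =
      insert (l₁.getLast h₁, l₂.head h₂) (chainEdges l₁ ∪ chainEdges l₂) := by
  induction l₁ with
  | nil => exact absurd rfl h₁
  | cons a t ih =>
    cases t with
    | nil =>
      obtain ⟨b, t, rfl⟩ := List.exists_cons_of_ne_nil h₂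
      simp
    | cons b t =>
      rw [List.cons_append, List.cons_append, chainEdges_cons_cons, ← List.cons_append,
        ih (List.cons_ne_nil b t), chainEdges_cons_cons, List.getLast_cons (List.cons_ne_nil b t)]
      ext e
      simp only [mem_insert, mem_union]
      tauto

end Lists

section PCCovers

variable {E : Finset (V × V)} {l l₁ l₂ : List V} {e : V × V} {v : V}

theorem IsDiCycle.cycleEdges_subset (h : IsDiCycle E l) : cycleEdges l ⊆ E := by
  obtain ⟨hne, -, hchain, hclose⟩ := h
  rw [cycleEdges_eq hne]
  exact insert_subset hclose (chainEdges_subset_of_isChain hchain)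

theorem IsDiPath.isDiCycle (h : IsDiPath E l) (he : (l.getLast h.1, l.head h.1) ∈ E) :
    IsDiCycle E l :=
  ⟨h.1, h.2.1, h.2.2, he⟩

theorem IsDiPath.append (h₁ : IsDiPath E l₁) (h₂ : IsDiPath E l₂) (hdisj : ∀ v ∈ l₁, v ∉ l₂)
    (he : (l₁.getLast h₁.1, l₂.head h₂.1) ∈ E) : IsDiPath E (l₁ ++ l₂) := by
  refine ⟨by simp [h₁.1], List.nodup_append.2 ⟨h₁.2.1, h₂.2.1, ?_⟩, h₁.2.2.append h₂.2.2 ?_⟩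
  · rintro v hv _ hv' rfl
    exact hdisj v hv hv'
  · intro x hx y hy
    rw [List.getLast?_eq_some_getLast h₁.1, Option.mem_some_iff] at hx
    rw [List.head?_eq_some_head h₂.1, Option.mem_some_iff] at hy
    rwa [← hx, ← hy]

namespace PCCover

variable (C : PCCover E)

def edges : Finset (V × V) := C.paths.biUnion chainEdges ∪ C.cycles.biUnion cycleEdges

variable {C}

theorem nodup_of_mem (hl : l ∈ C.paths ∪ C.cycles) : l.Nodup := by
  rcases mem_union.1 hl with hl | hl
  · exact (C.paths_are l hl).2.1
  · exact (C.cycles_are l hl).2.1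

theorem eq_of_mem_of_mem (h₁ : l₁ ∈ C.paths ∪ C.cycles) (h₂ : l₂ ∈ C.paths ∪ C.cycles)
    (hv₁ : v ∈ l₁) (hv₂ : v ∈ l₂) : l₁ = l₂ :=
  by_contra fun hne => C.pairwiseDisj l₁ h₁ l₂ h₂ hne v hv₁ hv₂

theorem mem_edges_of_mem_paths (hl : l ∈ C.paths) (he : e ∈ chainEdges l) : e ∈ C.edges :=
  mem_union_left _ (mem_biUnion.2 ⟨l, hl, he⟩)

theorem mem_edges_of_mem_cycles (hl : l ∈ C.cycles) (he : e ∈ cycleEdges l) : e ∈ C.edges :=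
  mem_union_right _ (mem_biUnion.2 ⟨l, hl, he⟩)

theorem exists_mem_cycleEdges (he : e ∈ C.edges) :
    ∃ l ∈ C.paths ∪ C.cycles, e ∈ cycleEdges l := by
  rcases mem_union.1 he with he | he <;> obtain ⟨l, hl, he⟩ := mem_biUnion.1 he
  · exact ⟨l, mem_union_left _ hl, chainEdges_subset_cycleEdges he⟩
  · exact ⟨l, mem_union_right _ hl, he⟩

theorem edges_subset : C.edges ⊆ E := by
  intro e he
  rcases mem_union.1 he with he | he <;> obtain ⟨l, hl, he⟩ := mem_biUnion.1 he
  · exact chainEdges_subset_of_isChain (C.paths_are l hl).2.2 he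
  · exact (C.cycles_are l hl).cycleEdges_subset he

theorem injOn_snd_edges : Set.InjOn Prod.snd (C.edges : Set (V × V)) := by
  intro e he e' he' hee'
  obtain ⟨l, hl, hel⟩ := exists_mem_cycleEdges he
  obtain ⟨l', hl', hel'⟩ := exists_mem_cycleEdges he'
  obtain rfl := eq_of_mem_of_mem hl hl' (mem_of_mem_cycleEdges hel).2
    (hee' ▸ (mem_of_mem_cycleEdges hel').2)
  exact cycleEdges_injOn_snd (nodup_of_mem hl) hel hel' hee'

theorem injOn_fst_edges : Set.InjOn Prod.fst (C.edges : Set (V × V)) := by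
  intro e he e' he' hee'
  obtain ⟨l, hl, hel⟩ := exists_mem_cycleEdges he
  obtain ⟨l', hl', hel'⟩ := exists_mem_cycleEdges he'
  obtain rfl := eq_of_mem_of_mem hl hl' (mem_of_mem_cycleEdges hel).1
    (hee' ▸ (mem_of_mem_cycleEdges hel').1)
  exact cycleEdges_injOn_fst (nodup_of_mem hl) hel hel' hee'

theorem head_eq_of_notMem_image_snd (hl : l ∈ C.paths ∪ C.cycles) (hv : v ∈ l)
    (hsrc : v ∉ C.edges.image Prod.snd) : l ∈ C.paths ∧ ∃ hne : l ≠ [], l.head hne = v := by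
  have hpath : l ∈ C.paths := by
    refine (mem_union.1 hl).resolve_right fun hc => ?_
    obtain ⟨u, hu⟩ := exists_mem_cycleEdges_snd hv
    exact hsrc (mem_image_of_mem Prod.snd (mem_edges_of_mem_cycles hc hu))
  refine ⟨hpath, List.ne_nil_of_mem hv, ?_⟩
  obtain ⟨a, t, rfl⟩ := List.exists_cons_of_ne_nil (List.ne_nil_of_mem hv)
  refine ((List.mem_cons.1 hv).resolve_right fun ht => ?_).symm
  obtain ⟨u, hu⟩ := exists_mem_chainEdges_of_mem_tail (l := a :: t) ht
  exact hsrc (mem_image_of_mem Prod.snd (mem_edges_of_mem_paths hpath hu))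

theorem getLast_eq_of_notMem_image_fst (hl : l ∈ C.paths ∪ C.cycles) (hv : v ∈ l)
    (hsink : v ∉ C.edges.image Prod.fst) :
    l ∈ C.paths ∧ ∃ hne : l ≠ [], l.getLast hne = v := by
  have hpath : l ∈ C.paths := by
    refine (mem_union.1 hl).resolve_right fun hc => ?_
    obtain ⟨w, hw⟩ := exists_mem_cycleEdges_fst hv
    exact hsink (mem_image_of_mem Prod.fst (mem_edges_of_mem_cycles hc hw))
  refine ⟨hpath, List.ne_nil_of_mem hv, by_contra fun hlast => ?_⟩
  obtain ⟨w, hw⟩ := exists_mem_chainEdges_of_mem_dropLast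
    (List.mem_dropLast_of_mem_of_ne_getLast hv (Ne.symm hlast))
  exact hsink (mem_image_of_mem Prod.fst (mem_edges_of_mem_paths hpath hw))

theorem card_sources_edges_le [Fintype V] : #(sources C.edges) ≤ #C.paths := by
  choose owner howner hmem using C.covers
  refine card_le_card_of_injOn owner (fun v hv => ?_) fun v hv w hw hvw => ?_
  · exact (head_eq_of_notMem_image_snd (howner v) (hmem v) (mem_sources.1 hv)).1
  · obtain ⟨-, hne, hhead⟩ := head_eq_of_notMem_image_snd (howner v) (hmem v) (mem_sources.1 hv)
    obtain ⟨-, hne', hhead'⟩ := head_eq_of_notMem_image_snd (howner w) (hmem w) (mem_sources.1 hw)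
    simp only [hvw] at hhead
    exact hhead.symm.trans hhead'

theorem card_sinks_edges_le [Fintype V] : #(sinks C.edges) ≤ #C.paths := by
  have := card_sinks_add_card C.injOn_fst_edges
  have := card_sources_add_card C.injOn_snd_edges
  have := C.card_sources_edges_le
  omega

end PCCover

end PCCovers

namespace PCCover

variable {E : Finset (V × V)} {l l₁ l₂ : List V} {a b : V}

theorem exists_edges_eq_empty [Fintype V] :
    ∃ C : PCCover E, C.edges = ∅ ∧ #C.paths = Fintype.card V := by
  refine ⟨⟨univ.image ([·]), ∅, ?_, by simp, disjoint_empty_right _, ?_, ?_⟩, ?_, ?_⟩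
  · simp only [mem_image, mem_univ, true_and, forall_exists_index, forall_apply_eq_imp_iff]
    exact fun v => ⟨List.cons_ne_nil v [], List.nodup_singleton v, List.isChain_singleton v⟩
  · simp only [union_empty, mem_image, mem_univ, true_and, ne_eq, List.mem_singleton,
      forall_exists_index, forall_apply_eq_imp_iff, forall_eq]
    exact fun u w huw hwu => huw (by rw [hwu])
  · exact fun v => ⟨[v], by simp, List.mem_singleton_self v⟩
  · ext e
    simp [edges]
  · rw [card_image_of_injective _ List.singleton_injective, card_univ]

theorem exists_close (C : PCCover E) (hl : l ∈ C.paths) (hne : l ≠ [])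
    (he : (l.getLast hne, l.head hne) ∈ E) :
    ∃ C' : PCCover E, C'.edges = insert (l.getLast hne, l.head hne) C.edges ∧
      #C'.paths + 1 = #C.paths := by
  have hmembers : C.paths.erase l ∪ insert l C.cycles = C.paths ∪ C.cycles := by
    rw [union_insert, ← insert_union, insert_erase hl]
  refine ⟨⟨C.paths.erase l, insert l C.cycles, fun m hm => C.paths_are m (mem_of_mem_erase hm),
    ?_, ?_, hmembers ▸ C.pairwiseDisj, hmembers ▸ C.covers⟩, ?_, card_erase_add_one hl⟩
  · exact forall_mem_insert _ _ _ |>.2 ⟨(C.paths_are l hl).isDiCycle he, C.cycles_are⟩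
  · exact disjoint_insert_right.2 ⟨notMem_erase l _,
      C.disj.mono_left (erase_subset l C.paths)⟩
  · simp only [edges]
    conv_rhs => rw [← insert_erase hl]
    rw [biUnion_insert, biUnion_insert, cycleEdges_eq hne]
    ext e
    simp only [mem_union, mem_insert]
    tauto

theorem mem_of_mem_erase_erase_union (C : PCCover E) (hl₁ : l₁ ∈ C.paths) (hl₂ : l₂ ∈ C.paths)
    {m : List V} (hm : m ∈ (C.paths.erase l₁).erase l₂ ∪ C.cycles) :
    m ∈ C.paths ∪ C.cycles ∧ m ≠ l₁ ∧ m ≠ l₂ := by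
  rcases mem_union.1 hm with hm | hm
  · obtain ⟨hm₂, hm₁, hm⟩ := (by simpa using hm : m ≠ l₂ ∧ m ≠ l₁ ∧ m ∈ C.paths)
    exact ⟨mem_union_left _ hm, hm₁, hm₂⟩
  · exact ⟨mem_union_right _ hm, fun h => disjoint_left.1 C.disj (h ▸ hl₁) hm,
      fun h => disjoint_left.1 C.disj (h ▸ hl₂) hm⟩

theorem notMem_append_of_mem_erase_erase_union (C : PCCover E) (hl₁ : l₁ ∈ C.paths)
    (hl₂ : l₂ ∈ C.paths) ⦃m : List V⦄ (hm : m ∈ (C.paths.erase l₁).erase l₂ ∪ C.cycles)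
    ⦃v : V⦄ (hv : v ∈ m) : v ∉ l₁ ++ l₂ := by
  obtain ⟨hm, hne₁, hne₂⟩ := C.mem_of_mem_erase_erase_union hl₁ hl₂ hm
  intro hv'
  rcases List.mem_append.1 hv' with hv' | hv'
  · exact hne₁ (eq_of_mem_of_mem hm (mem_union_left _ hl₁) hv hv')
  · exact hne₂ (eq_of_mem_of_mem hm (mem_union_left _ hl₂) hv hv')

theorem exists_mem_insert_append (C : PCCover E) (v : V) :
    ∃ m ∈ insert (l₁ ++ l₂) ((C.paths.erase l₁).erase l₂) ∪ C.cycles, v ∈ m := by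
  obtain ⟨m, hm, hv⟩ := C.covers v
  by_cases hm₁ : m = l₁
  · exact ⟨l₁ ++ l₂, by simp, List.mem_append_left _ (hm₁ ▸ hv)⟩
  by_cases hm₂ : m = l₂
  · exact ⟨l₁ ++ l₂, by simp, List.mem_append_right _ (hm₂ ▸ hv)⟩
  refine ⟨m, ?_, hv⟩
  rcases mem_union.1 hm with hm | hm
  · exact mem_union_left _ (mem_insert_of_mem (by simp [hm, hm₁, hm₂]))
  · exact mem_union_right _ hm

theorem exists_join (C : PCCover E) (hl₁ : l₁ ∈ C.paths) (hl₂ : l₂ ∈ C.paths) (h₁₂ : l₁ ≠ l₂)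
    (h₁ : l₁ ≠ []) (h₂ : l₂ ≠ []) (he : (l₁.getLast h₁, l₂.head h₂) ∈ E) :
    ∃ C' : PCCover E, C'.edges = insert (l₁.getLast h₁, l₂.head h₂) C.edges ∧
      #C'.paths + 1 = #C.paths := by
  set rest := (C.paths.erase l₁).erase l₂
  have hpaths : C.paths = insert l₁ (insert l₂ rest) := by
    rw [insert_erase (mem_erase.2 ⟨h₁₂.symm, hl₂⟩), insert_erase hl₁]
  have hjoin := C.notMem_append_of_mem_erase_erase_union hl₁ hl₂
  have hhead : l₁.head h₁ ∈ l₁ ++ l₂ := List.mem_append_left l₂ (List.head_mem h₁)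
  have hnew : l₁ ++ l₂ ∉ rest := fun h => hjoin (mem_union_left _ h) hhead hhead
  refine ⟨⟨insert (l₁ ++ l₂) rest, C.cycles, ?_, C.cycles_are, ?_, ?_,
    C.exists_mem_insert_append⟩, ?_, ?_⟩
  · refine forall_mem_insert _ _ _ |>.2 ⟨(C.paths_are l₁ hl₁).append (C.paths_are l₂ hl₂)
      (C.pairwiseDisj l₁ (mem_union_left _ hl₁) l₂ (mem_union_left _ hl₂) h₁₂) he,
      fun m hm => C.paths_are m (mem_of_mem_erase (mem_of_mem_erase hm))⟩
  · exact disjoint_insert_left.2 ⟨fun hc => hjoin (mem_union_right _ hc) hhead hhead,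
      C.disj.mono_left ((erase_subset _ _).trans (erase_subset _ _))⟩
  · intro m hm m' hm' hne v hv hv'
    rw [insert_union] at hm hm'
    rcases mem_insert.1 hm with rfl | hm <;> rcases mem_insert.1 hm' with rfl | hm'
    · exact hne rfl
    · exact hjoin hm' hv' hv
    · exact hjoin hm hv hv'
    · exact C.pairwiseDisj m (C.mem_of_mem_erase_erase_union hl₁ hl₂ hm).1 m'
        (C.mem_of_mem_erase_erase_union hl₁ hl₂ hm').1 hne v hv hv'
  · simp only [edges]
    rw [hpaths, biUnion_insert, biUnion_insert, biUnion_insert, chainEdges_append h₁ h₂]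
    ext e
    simp only [mem_union, mem_insert]
    tauto
  · have h₂ : #rest + 1 = #(C.paths.erase l₁) := card_erase_add_one (mem_erase.2 ⟨h₁₂.symm, hl₂⟩)
    have h₁ : #(C.paths.erase l₁) + 1 = #C.paths := card_erase_add_one hl₁
    rw [card_insert_of_notMem hnew]
    omega

theorem exists_insert_edge (C : PCCover E) (hab : (a, b) ∈ E)
    (ha : a ∉ C.edges.image Prod.fst) (hb : b ∉ C.edges.image Prod.snd) :
    ∃ C' : PCCover E, C'.edges = insert (a, b) C.edges ∧ #C'.paths + 1 = #C.paths := by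
  obtain ⟨l₁, hm₁, ha₁⟩ := C.covers a
  obtain ⟨l₂, hm₂, hb₂⟩ := C.covers b
  obtain ⟨hl₁, h₁, rfl⟩ := getLast_eq_of_notMem_image_fst hm₁ ha₁ ha
  obtain ⟨hl₂, h₂, rfl⟩ := head_eq_of_notMem_image_snd hm₂ hb₂ hb
  by_cases h₁₂ : l₁ = l₂
  · subst h₁₂
    exact C.exists_close hl₁ h₁ hab
  · exact C.exists_join hl₁ hl₂ h₁₂ h₁ h₂ hab

end PCCover

section Counting

variable [Fintype V] {E F M : Finset (V × V)}

theorem exists_pcCover_edges_eq (hFE : F ⊆ E) (hfst : Set.InjOn Prod.fst (F : Set (V × V)))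
    (hsnd : Set.InjOn Prod.snd (F : Set (V × V))) :
    ∃ C : PCCover E, C.edges = F ∧ #C.paths + #F = Fintype.card V := by
  induction F using Finset.induction_on with
  | empty =>
    obtain ⟨C, hC, hcard⟩ := PCCover.exists_edges_eq_empty (E := E)
    exact ⟨C, hC, by simpa using hcard⟩
  | insert e F he ih =>
    obtain ⟨a, b⟩ := e
    rw [injOn_insert_iff he] at hfst hsnd
    obtain ⟨C, rfl, hcard⟩ := ih ((subset_insert _ _).trans hFE) hfst.1 hsnd.1
    obtain ⟨C', hC', hcard'⟩ := C.exists_insert_edge (hFE (mem_insert_self _ _)) hfst.2 hsnd.2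
    exact ⟨C', hC', by rw [card_insert_of_notMem he]; omega⟩

theorem le_card_sinks {pmin : ℕ} (hp : pmin ∈ lowerBounds {m | ∃ C : PCCover E, #C.paths = m})
    (hFE : F ⊆ E) (hsnd : Set.InjOn Prod.snd (F : Set (V × V))) : pmin ≤ #(sinks F) := by
  obtain ⟨F', hF'F, hfst, himage⟩ :=
    exists_subset_injOn_image_eq_of_surjOn (f := Prod.fst) _ (F.image Prod.fst) coe_image.subset
  obtain ⟨C, -, hcard⟩ := exists_pcCover_edges_eq ((coe_subset.1 hF'F).trans hFE) hfst
    (hsnd.mono hF'F)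
  have := hp ⟨C, rfl⟩
  have := card_sinks_add_card_image_fst (F := F)
  rw [← himage, card_image_of_injOn hfst] at this
  omega

theorem exists_superset_sources_eq (hME : M ⊆ E) (hM : Set.InjOn Prod.snd (M : Set (V × V))) :
    ∃ F, M ⊆ F ∧ F ⊆ E ∧ Set.InjOn Prod.snd (F : Set (V × V)) ∧ sources F = sources E := by
  set N := E.filter (·.2 ∉ M.image Prod.snd)
  obtain ⟨N', hN'N, hN', himage⟩ :=
    exists_subset_injOn_image_eq_of_surjOn (f := Prod.snd) _ (N.image Prod.snd) coe_image.subset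
  have hN'N : N' ⊆ N := coe_subset.1 hN'N
  refine ⟨M ∪ N', subset_union_left, union_subset hME (hN'N.trans (filter_subset _ _)), ?_, ?_⟩
  · rw [coe_union, Set.injOn_union (disjoint_coe.2 (disjoint_left.2 fun e heM heN' =>
      (mem_filter.1 (hN'N heN')).2 (mem_image_of_mem _ heM)))]
    refine ⟨hM, hN', fun e he e' he' hee' => (mem_filter.1 (hN'N he')).2 ?_⟩
    exact hee' ▸ mem_image_of_mem _ he
  · rw [sources_eq_compl, sources_eq_compl, image_union, himage]
    congr 1
    ext v
    simp only [N, mem_union, mem_image, mem_filter]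
    constructor
    · rintro (⟨e, he, rfl⟩ | ⟨e, ⟨he, -⟩, rfl⟩)
      exacts [⟨e, hME he, rfl⟩, ⟨e, he, rfl⟩]
    · rintro ⟨e, he, rfl⟩
      by_cases hM : ∃ e' ∈ M, e'.2 = e.2
      · exact Or.inl hM
      · exact Or.inr ⟨e, ⟨he, hM⟩, rfl⟩

end Counting

section Necklaces

variable {E F : Finset (V × V)} {H : Finset V × Finset (V × V)} {l : List V} {v w : V}

theorem IsDiCycle.exists_pred (h : IsDiCycle F l) (hw : w ∈ l) : ∃ u ∈ l, (u, w) ∈ F := by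
  obtain ⟨u, hu⟩ := exists_mem_cycleEdges_snd hw
  exact ⟨u, (mem_of_mem_cycleEdges hu).1, h.cycleEdges_subset hu⟩

/-- Following predecessors inside a finite set must eventually repeat; the orbit of a periodic
point, read backwards, is a directed cycle. -/
theorem exists_isDiCycle_of_forall_exists_pred {S : Finset V} (hS : S.Nonempty)
    (h : ∀ v ∈ S, ∃ u ∈ S, (u, v) ∈ F) : ∃ l, IsDiCycle F l := by
  choose! pred hpredS hpred using h
  have hiter : ∀ n, ∀ x ∈ S, pred^[n] x ∈ S := fun n x hx =>
    Set.MapsTo.iterate (s := (S : Set V)) (fun y hy => hpredS y hy) n hx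
  obtain ⟨x, hx⟩ := hS
  obtain ⟨m, n, hmn, heq⟩ := S.finite_toSet.exists_lt_map_eq_of_forall_mem
    (f := fun n => pred^[n] x) fun n => hiter n x hx
  set y := pred^[m] x
  have hy : y ∈ S := hiter m x hx
  have hper : Function.IsPeriodicPt pred (n - m) y := by
    change pred^[n - m] (pred^[m] x) = pred^[m] x
    rw [← Function.iterate_add_apply, Nat.sub_add_cancel hmn.le]
    exact heq.symm
  set p := Function.minimalPeriod pred y
  have hp : 0 < p := hper.minimalPeriod_pos (Nat.sub_pos_of_lt hmn)
  set orbit := (List.range p).map (pred^[·] y)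
  have horbit : orbit ≠ [] := by simp [orbit, hp.ne']
  refine ⟨orbit.reverse, List.reverse_ne_nil_iff.2 horbit, ?_, ?_, ?_⟩
  · exact List.nodup_reverse.2 <| List.nodup_range.map_on fun i hi j hj hij =>
      Function.iterate_injOn_Iio_minimalPeriod (List.mem_range.1 hi) (List.mem_range.1 hj) hij
  · change List.IsChain _ orbit.reverse
    rw [List.isChain_reverse, List.isChain_map, List.isChain_range]
    intro i _
    rw [Function.iterate_succ_apply']
    exact hpred _ (hiter i y hy)
  · rw [List.getLast_reverse, List.head_reverse]
    simp only [orbit, List.head_map, List.getLast_map, List.head_range, List.getLast_range,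
      Function.iterate_zero_apply]
    have hclose := hpred _ (hiter (p - 1) y hy)
    have hreturn : pred (pred^[p - 1] y) = y := by
      rw [← Function.iterate_succ_apply' pred, Nat.succ_eq_add_one, Nat.sub_add_cancel hp]
      exact Function.isPeriodicPt_minimalPeriod pred y
    rwa [hreturn] at hclose

theorem reflTransGen_of_wReach (hF : Set.InjOn Prod.snd (F : Set (V × V)))
    (hv : v ∉ F.image Prod.snd) (h : WReach F v w) :
    Relation.ReflTransGen (fun x y => (x, y) ∈ F) v w := by
  induction h with
  | refl => exact .refl
  | tail _ hstep ih =>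
    rename_i b c _
    rcases hstep with hbc | hcb
    · exact ih.tail hbc
    · -- `(c, b)` has to be the in-edge through which the directed path from `v` entered `b`
      rcases Relation.ReflTransGen.cases_tail ih with rfl | ⟨u, hvu, hub⟩
      · exact absurd (mem_image_of_mem Prod.snd hcb) hv
      · obtain rfl : u = c := congrArg Prod.fst (hF hub hcb rfl)
        exact hvu

theorem notMem_of_reflTransGen (hF : Set.InjOn Prod.snd (F : Set (V × V)))
    (hv : v ∉ F.image Prod.snd) (hl : IsDiCycle F l)
    (h : Relation.ReflTransGen (fun x y => (x, y) ∈ F) v w) : w ∉ l := by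
  induction h with
  | refl =>
    intro hvl
    obtain ⟨u, -, hu⟩ := hl.exists_pred hvl
    exact hv (mem_image_of_mem Prod.snd hu)
  | tail _ hbc ih =>
    intro hc
    obtain ⟨u, hu, huc⟩ := hl.exists_pred hc
    obtain rfl : u = _ := congrArg Prod.fst (hF huc hbc rfl)
    exact ih hu

namespace IsNecklace

theorem injOn_snd (hH : IsNecklace E H) : Set.InjOn Prod.snd (H.2 : Set (V × V)) := by
  intro e he e' he' hee'
  exact indeg_le_one_iff.1 (hH.2.2.2.2 _ (hH.2.2.1 e he).2) e he e' he' rfl hee'.symm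

theorem not_isClosedNecklace (hH : IsNecklace E H) (hv : v ∈ H.1)
    (hroot : v ∉ H.2.image Prod.snd) : ¬ IsClosedNecklace H := by
  rintro ⟨l, hl⟩
  have hhead : l.head hl.1 ∈ H.1 := (hH.2.2.1 _ hl.2.2.2).2
  exact notMem_of_reflTransGen hH.injOn_snd hroot hl
    (reflTransGen_of_wReach hH.injOn_snd hroot (hH.2.2.2.1 v hv _ hhead)) (List.head_mem hl.1)

theorem eq_of_notMem_image (hH : IsNecklace E H) (hv : v ∈ H.1)
    (hroot : v ∉ H.2.image Prod.snd) (hw : w ∈ H.1) (hroot' : w ∉ H.2.image Prod.snd) :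
    v = w := by
  rcases Relation.ReflTransGen.cases_tail
    (reflTransGen_of_wReach hH.injOn_snd hroot (hH.2.2.2.1 v hv w hw)) with h | ⟨u, -, hu⟩
  · exact h.symm
  · exact absurd (mem_image_of_mem Prod.snd hu) hroot'

theorem isClosedNecklace (hH : IsNecklace E H) (h : ∀ v ∈ H.1, v ∈ H.2.image Prod.snd) :
    IsClosedNecklace H := by
  refine exists_isDiCycle_of_forall_exists_pred hH.1 fun v hv => ?_
  obtain ⟨e, he, rfl⟩ := mem_image.1 (h v hv)
  exact ⟨e.1, (hH.2.2.1 e he).1, he⟩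

theorem card_filter_indeg_eq_zero (hH : IsNecklace E H) :
    #(H.1.filter (indeg H.2 · = 0)) = if IsClosedNecklace H then 0 else 1 := by
  simp only [indeg_eq_zero_iff]
  split_ifs with hclosed
  · exact card_eq_zero.2 (filter_eq_empty_iff.2 fun v hv hroot =>
      hH.not_isClosedNecklace hv hroot hclosed)
  · obtain ⟨v, hv, hroot⟩ : ∃ v ∈ H.1, v ∉ H.2.image Prod.snd := by
      by_contra! h
      exact hclosed (hH.isClosedNecklace h)
    refine card_eq_one.2 ⟨v, eq_singleton_iff_unique_mem.2 ⟨mem_filter.2 ⟨hv, hroot⟩, ?_⟩⟩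
    intro w hw
    exact (hH.eq_of_notMem_image hv hroot (mem_filter.1 hw).1 (mem_filter.1 hw).2).symm

end IsNecklace

end Necklaces

section NecklaceCovers

variable {E F : Finset (V × V)} {D : Finset (Finset V × Finset (V × V))}
  {H H₁ H₂ : Finset V × Finset (V × V)} {e : V × V} {v : V}

namespace IsNecklaceCover

theorem eq_of_mem_of_mem (hD : IsNecklaceCover E D) (h₁ : H₁ ∈ D) (h₂ : H₂ ∈ D)
    (hv₁ : v ∈ H₁.1) (hv₂ : v ∈ H₂.1) : H₁ = H₂ :=
  by_contra fun hne => disjoint_left.1 (hD.2.1 H₁ h₁ H₂ h₂ hne) hv₁ hv₂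

theorem biUnion_subset (hD : IsNecklaceCover E D) : D.biUnion Prod.snd ⊆ E :=
  Finset.biUnion_subset.2 fun H hH => (hD.1 H hH).2.1

theorem mem_of_mem_biUnion (hD : IsNecklaceCover E D) (hH : H ∈ D)
    (he : e ∈ D.biUnion Prod.snd) (hv : e.1 ∈ H.1 ∨ e.2 ∈ H.1) : e ∈ H.2 := by
  obtain ⟨H', hH', he'⟩ := mem_biUnion.1 he
  have hends := (hD.1 H' hH').2.2.1 e he'
  obtain rfl : H' = H := by
    rcases hv with hv | hv
    exacts [hD.eq_of_mem_of_mem hH' hH hends.1 hv, hD.eq_of_mem_of_mem hH' hH hends.2 hv]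
  exact he'

theorem indeg_biUnion (hD : IsNecklaceCover E D) (hH : H ∈ D) (hv : v ∈ H.1) :
    indeg (D.biUnion Prod.snd) v = indeg H.2 v := by
  refine congrArg card (ext fun e => ?_)
  simp only [mem_filter]
  refine ⟨fun ⟨he, hev⟩ => ⟨hD.mem_of_mem_biUnion hH he (.inr (hev ▸ hv)), hev⟩,
    fun ⟨he, hev⟩ => ⟨mem_biUnion.2 ⟨H, hH, he⟩, hev⟩⟩

theorem outdeg_biUnion (hD : IsNecklaceCover E D) (hH : H ∈ D) (hv : v ∈ H.1) :
    outdeg (D.biUnion Prod.snd) v = outdeg H.2 v := by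
  refine congrArg card (ext fun e => ?_)
  simp only [mem_filter]
  refine ⟨fun ⟨he, hev⟩ => ⟨hD.mem_of_mem_biUnion hH he (.inl (hev ▸ hv)), hev⟩,
    fun ⟨he, hev⟩ => ⟨mem_biUnion.2 ⟨H, hH, he⟩, hev⟩⟩

theorem injOn_snd_biUnion (hD : IsNecklaceCover E D) :
    Set.InjOn Prod.snd (D.biUnion Prod.snd : Set (V × V)) := by
  refine forall_indeg_le_one_iff.1 fun v => ?_
  obtain ⟨H, hH, hv⟩ := hD.2.2 v
  rw [hD.indeg_biUnion hH hv]
  exact (hD.1 H hH).2.2.2.2 v hv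

theorem card_filter_univ [Fintype V] (hD : IsNecklaceCover E D) (p : V → Prop)
    [DecidablePred p] : #(univ.filter p) = ∑ H ∈ D, #(H.1.filter p) := by
  rw [← card_biUnion fun H₁ h₁ H₂ h₂ hne => disjoint_filter_filter (hD.2.1 H₁ h₁ H₂ h₂ hne)]
  congr 1
  ext v
  simp only [mem_filter, mem_univ, true_and, mem_biUnion]
  exact ⟨fun hv => (hD.2.2 v).imp fun H ⟨hH, hvH⟩ => ⟨hH, hvH, hv⟩,
    fun ⟨_, _, _, hv⟩ => hv⟩

theorem numOpen_eq [Fintype V] (hD : IsNecklaceCover E D) :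
    numOpen D = #(sources (D.biUnion Prod.snd)) := by
  rw [sources, hD.card_filter_univ, numOpen, card_filter]
  refine sum_congr rfl fun H hH => ?_
  rw [filter_congr fun v hv => by rw [hD.indeg_biUnion hH hv],
    (hD.1 H hH).card_filter_indeg_eq_zero, ite_not]

theorem numSinks_eq [Fintype V] (hD : IsNecklaceCover E D) :
    numSinks D = #(sinks (D.biUnion Prod.snd)) := by
  rw [sinks, hD.card_filter_univ, numSinks]
  exact sum_congr rfl fun H hH =>
    congrArg card (filter_congr fun v hv => by rw [hD.outdeg_biUnion hH hv])

end IsNecklaceCover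

theorem wReach_symm {a b : V} (h : WReach F a b) : WReach F b a := by
  induction h with
  | refl => exact .refl
  | tail _ hstep ih => exact .head hstep.symm ih

variable [Fintype V]

noncomputable def weakComponent (F : Finset (V × V)) (v : V) : Finset V × Finset (V × V) :=
  (univ.filter (WReach F v), F.filter (WReach F v ·.1))

theorem mem_weakComponent_fst {w : V} : w ∈ (weakComponent F v).1 ↔ WReach F v w := by
  simp [weakComponent]

theorem weakComponent_eq {w : V} (h : WReach F v w) : weakComponent F v = weakComponent F w := by
  have : WReach F v = WReach F w :=
    funext fun x => propext ⟨fun hx => (wReach_symm h).trans hx, fun hx => h.trans hx⟩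
  simp only [weakComponent, this]

theorem reflTransGen_weakComponent {a b : V} (ha : WReach F v a) (hab : WReach F a b) :
    WReach (weakComponent F v).2 a b := by
  induction hab with
  | refl => exact .refl
  | tail hac hstep ih =>
    have hvc := ha.trans hac
    refine ih.tail (hstep.imp (fun hcd => mem_filter.2 ⟨hcd, hvc⟩)
      fun hdc => mem_filter.2 ⟨hdc, hvc.tail (.inr hdc)⟩)

theorem exists_isNecklaceCover_biUnion_eq (hFE : F ⊆ E)
    (hF : Set.InjOn Prod.snd (F : Set (V × V))) :
    ∃ D, IsNecklaceCover E D ∧ D.biUnion Prod.snd = F := by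
  refine ⟨univ.image (weakComponent F), ⟨?_, ?_, ?_⟩, ?_⟩
  · simp only [mem_image, mem_univ, true_and, forall_exists_index, forall_apply_eq_imp_iff]
    intro v
    refine ⟨⟨v, mem_weakComponent_fst.2 .refl⟩, (filter_subset _ _).trans hFE, fun e he => ?_,
      fun a ha b hb => ?_, fun w _ => ?_⟩
    · obtain ⟨he, hve⟩ := mem_filter.1 he
      exact ⟨mem_weakComponent_fst.2 hve, mem_weakComponent_fst.2 (hve.tail (.inl he))⟩
    · rw [mem_weakComponent_fst] at ha hb
      exact reflTransGen_weakComponent ha ((wReach_symm ha).trans hb)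
    · exact forall_indeg_le_one_iff.2 (hF.mono (filter_subset _ _)) w
  · simp only [mem_image, mem_univ, true_and]
    rintro _ ⟨u, rfl⟩ _ ⟨w, rfl⟩ hne
    refine disjoint_left.2 fun x hxu hxw => hne ?_
    rw [weakComponent_eq (mem_weakComponent_fst.1 hxu),
      weakComponent_eq (mem_weakComponent_fst.1 hxw)]
  · exact fun v => ⟨weakComponent F v, mem_image_of_mem _ (mem_univ v),
      mem_weakComponent_fst.2 .refl⟩
  · ext e
    simp only [weakComponent, mem_biUnion, mem_image, mem_univ, true_and, exists_exists_eq_and,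
      mem_filter]
    exact ⟨fun ⟨_, he, _⟩ => he, fun he => ⟨e.1, he, .refl⟩⟩

end NecklaceCovers

theorem mul_add_two_mul_tsub_le {k r R S p : ℕ} (hk : 3 ≤ k) (hrR : r ≤ R) (hRS : R ≤ S)
    (hpS : p ≤ S) : (k - 1) * r + 2 * (p - r) ≤ (k - 1) * R + 2 * (S - R) := by
  obtain ⟨j, rfl⟩ : ∃ j, k = j + 3 := ⟨k - 3, by omega⟩
  have := Nat.mul_le_mul_left j hrR
  simp only [show j + 3 - 1 = j + 2 by omega, Nat.add_mul]
  omega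

theorem stmt18 [Fintype V] (E : Finset (V × V)) (k : ℕ) (hk : 3 ≤ k) (pmin : ℕ)
    (hp : IsLeast {m : ℕ | ∃ C : PCCover E, C.paths.card = m} pmin) :
    IsLeast {m : ℕ | ∃ D : Finset (Finset V × Finset (V × V)),
        IsNecklaceCover E D ∧ (k - 1) * numOpen D + 2 * numLeaves D = m}
      ((k - 1) * (Finset.univ.filter (fun v : V => indeg E v = 0)).card +
        2 * (pmin - (Finset.univ.filter (fun v : V => indeg E v = 0)).card)) := by
  change IsLeast _ ((k - 1) * #(sources E) + 2 * (pmin - #(sources E)))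
  obtain ⟨C₀, hC₀⟩ := hp.1
  refine ⟨?_, ?_⟩
  · obtain ⟨F, hC₀F, hFE, hF, hsources⟩ :=
      exists_superset_sources_eq C₀.edges_subset C₀.injOn_snd_edges
    obtain ⟨D, hD, rfl⟩ := exists_isNecklaceCover_biUnion_eq hFE hF
    have hsinks : numSinks D = pmin := by
      rw [hD.numSinks_eq]
      refine le_antisymm ?_ (le_card_sinks hp.2 hFE hF)
      calc #(sinks (D.biUnion Prod.snd)) ≤ #(sinks C₀.edges) := card_le_card (sinks_anti hC₀F)
        _ ≤ pmin := hC₀ ▸ C₀.card_sinks_edges_le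
    exact ⟨D, hD, by rw [numLeaves, hsinks, hD.numOpen_eq, hsources]⟩
  · rintro _ ⟨D, hD, rfl⟩
    have hF := hD.injOn_snd_biUnion
    rw [numLeaves, hD.numOpen_eq, hD.numSinks_eq]
    exact mul_add_two_mul_tsub_le hk (card_le_card (sources_anti hD.biUnion_subset))
      (card_sources_le_card_sinks hF) (le_card_sinks hp.2 hD.biUnion_subset hF)
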